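/- Let M be the 6×6 real matrix (1/480) · [[16, −3, −3, −10, 0, 0], [−3, 16, −3, 0, −10, 0], [−3, −3, 16, 0, 0, −10], [2, 14, 14, 70, 30, 30], [14, 2, 14, 30, 70, 30], [14, 14, 2, 30, 30, 70]]. Then the symmetric matrix (M + M^⊤)/2 is positive definite; equivalently, there exists λ > 0 such that ⟨M x, x⟩ ≥ λ ‖x‖² for all x ∈ ℝ⁶. -/

import Mathlib

/-- The local Gram matrix `⟨𝐍, 𝐍̃⟩_{L₂(𝐓)}/vol(𝐓)` from Section 3.3. -/
noncomputable def gramM : Matrix (Fin 6) (Fin 6) ℝ :=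
  (1 / 480 : ℝ) • !![16, -3, -3, -10, 0, 0;
                     -3, 16, -3, 0, -10, 0;
                     -3, -3, 16, 0, 0, -10;
                     2, 14, 14, 70, 30, 30;
                     14, 2, 14, 30, 70, 30;
                     14, 14, 2, 30, 30, 70]

namespace Matrix

variable {n : Type*}

theorem isHermitian_half_smul_add_transpose (A : Matrix n n ℝ) :
    ((1 / 2 : ℝ) • (A + Aᵀ)).IsHermitian := by
  rw [IsHermitian, conjTranspose_eq_transpose_of_trivial, transpose_smul, transpose_add,
    transpose_transpose, add_comm]

variable [Fintype n]

theorem dotProduct_half_smul_add_transpose_mulVec (A : Matrix n n ℝ) (x : n → ℝ) :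
    star x ⬝ᵥ ((1 / 2 : ℝ) • (A + Aᵀ)) *ᵥ x = A *ᵥ x ⬝ᵥ x := by
  have hT : x ⬝ᵥ Aᵀ *ᵥ x = A *ᵥ x ⬝ᵥ x := by
    rw [dotProduct_mulVec, vecMul_transpose]
  have hA : x ⬝ᵥ A *ᵥ x = A *ᵥ x ⬝ᵥ x := dotProduct_comm _ _
  rw [star_trivial, smul_mulVec, add_mulVec, dotProduct_smul, dotProduct_add, hT, hA, smul_eq_mul]
  ring

theorem sum_sq_pos_of_ne_zero {x : n → ℝ} (hx : x ≠ 0) : 0 < ∑ i, x i ^ 2 := by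
  obtain ⟨i, hi⟩ := Function.ne_iff.mp hx
  exact Finset.sum_pos' (fun j _ ↦ sq_nonneg (x j)) ⟨i, Finset.mem_univ i, sq_pos_of_ne_zero hi⟩

theorem posDef_half_smul_add_transpose_of_coercive (A : Matrix n n ℝ) {c : ℝ} (hc : 0 < c)
    (hA : ∀ x : n → ℝ, c * ∑ i, x i ^ 2 ≤ A *ᵥ x ⬝ᵥ x) :
    ((1 / 2 : ℝ) • (A + Aᵀ)).PosDef := by
  refine .of_dotProduct_mulVec_pos (isHermitian_half_smul_add_transpose A) fun x hx ↦ ?_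
  rw [dotProduct_half_smul_add_transpose_mulVec]
  exact (mul_pos hc (sum_sq_pos_of_ne_zero hx)).trans_le (hA x)

end Matrix

open Matrix

/-- The squares come from an `LDLᵀ` factorisation of `960 • ((M + Mᵀ) / 2 - (3 / 160) • 1)`. -/
theorem gramM_mulVec_dotProduct (x : Fin 6 → ℝ) :
    gramM *ᵥ x ⬝ᵥ x =
      3 / 160 * ∑ i, x i ^ 2 + 1 / 960 *
        (14 * (x 0 - 3/7 * x 1 - 3/7 * x 2 - 4/7 * x 3 + x 4 + x 5) ^ 2
        + 80/7 * (x 1 - 3/4 * x 2 + 37/40 * x 3 - 7/40 * x 4 + 7/4 * x 5) ^ 2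
        + 5 * (x 2 + 37/10 * x 3 + 37/10 * x 4 + 13/5 * x 5) ^ 2
        + 196/5 * (x 3 + 1/28 * x 4 + 1/28 * x 5) ^ 2
        + 783/20 * (x 4 + 1/29 * x 5) ^ 2
        + 1134/29 * x 5 ^ 2) := by
  simp only [dotProduct, mulVec, gramM, Matrix.smul_apply, of_apply, cons_val', cons_val_fin_one,
    smul_eq_mul, Fin.sum_univ_six, cons_val_zero, cons_val_one, cons_val]
  ring

theorem gramM_coercive (x : Fin 6 → ℝ) : 3 / 160 * ∑ i, x i ^ 2 ≤ gramM *ᵥ x ⬝ᵥ x := by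
  rw [gramM_mulVec_dotProduct]
  exact le_add_of_nonneg_right (by positivity)

theorem stmt16 :
    ((1 / 2 : ℝ) • (gramM + gramM.transpose)).PosDef ∧
    ∃ lam : ℝ, 0 < lam ∧
      ∀ x : Fin 6 → ℝ, lam * (∑ i, x i ^ 2) ≤ dotProduct (gramM.mulVec x) x :=
  ⟨posDef_half_smul_add_transpose_of_coercive gramM (by norm_num) gramM_coercive,
    3 / 160, by norm_num, gramM_coercive⟩
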